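/- Let T be a finite edge-weighted tree with at least two vertices, rooted at the homebase r, with invoking cost q ≥ 0, and assume every vertex of T other than r and the leaves has at least two children. Define the labeling k recursively by: k(v) = 1 for every leaf v; and for a non-leaf vertex v with children u_1, …, u_m, k(v) = max{1, Σ_{j=1}^m κ(u_j)}, where κ(u_j) = k(u_j) − 1 if k(u_j) = 1 and d(v, f(u_j)) ≤ d(r, v) + q (f(u_j) being a leaf of T_{u_j} at maximum distance from u_j), and κ(u_j) = k(u_j) otherwise. Then for every vertex v of T, every cost-optimal exploration strategy for T contains at least k(v) walks that visit at least one vertex of the subtree T_v. -/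

import Mathlib

open SimpleGraph

/-- An exploration strategy on a graph `G` from homebase `h`: a nonempty finite
family of walks, each starting at `h`, that together visit every vertex. -/
structure ExplStrategy {V : Type*} (G : SimpleGraph V) (h : V) where
  k : ℕ
  kpos : 0 < k
  ends : Fin k → V
  walks : (i : Fin k) → G.Walk h (ends i)
  covers : ∀ v : V, ∃ i, v ∈ (walks i).support

/-- The weight of a walk: the sum of the weights of its edges, with multiplicity. -/
def walkWeight {V : Type*} {G : SimpleGraph V} (w : Sym2 V → ℝ) {a b : V}
    (p : G.Walk a b) : ℝ := (p.edges.map w).sum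

/-- Cost of a strategy: `k·q` plus the total distance traversed. -/
noncomputable def stratCost {V : Type*} {G : SimpleGraph V} {h : V}
    (w : Sym2 V → ℝ) (q : ℝ) (S : ExplStrategy G h) : ℝ :=
  (S.k : ℝ) * q + ∑ i, walkWeight w (S.walks i)

/-- A strategy is cost-optimal if no exploration strategy has strictly smaller cost. -/
def IsOptimal {V : Type*} {G : SimpleGraph V} {h : V} (w : Sym2 V → ℝ) (q : ℝ)
    (S : ExplStrategy G h) : Prop :=
  ∀ S' : ExplStrategy G h, stratCost w q S ≤ stratCost w q S'

/-- Weighted distance between two vertices: infimum of weights of connecting walks. -/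
noncomputable def wdist {V : Type*} (G : SimpleGraph V) (w : Sym2 V → ℝ) (u x : V) : ℝ :=
  sInf {c : ℝ | ∃ p : G.Walk u x, walkWeight w p = c}

/-- `u` belongs to the subtree `T_v` of the tree `G` rooted at `r`:
`v` lies on every (equivalently, in a tree, the unique) path from `r` to `u`. -/
def InSubtree {V : Type*} (G : SimpleGraph V) (r v u : V) : Prop :=
  ∀ p : G.Path r u, v ∈ p.1.support

/-- `x` is a leaf of the tree `G` rooted at `r`: a vertex of degree 1 different
from the root. -/
def IsTLeaf {V : Type*} (G : SimpleGraph V) (r x : V) : Prop :=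
  x ≠ r ∧ ∃! y, G.Adj x y

/-- `u` is a child of `v` in the tree `G` rooted at `r`. -/
def IsTChild {V : Type*} (G : SimpleGraph V) (r v u : V) : Prop :=
  G.Adj v u ∧ InSubtree G r v u

open scoped Classical in
/-- Total edge weight of the graph `G`. -/
noncomputable def totalWeight {V : Type*} [Fintype V] (G : SimpleGraph V)
    (w : Sym2 V → ℝ) : ℝ :=
  ∑ e : Sym2 V, if e ∈ G.edgeSet then w e else 0

open scoped Classical in
/-- The set of children of `v` in the tree `G` rooted at `r`, as a finset. -/
noncomputable def childrenFinset {V : Type*} [Fintype V] (G : SimpleGraph V)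
    (r v : V) : Finset V :=
  Finset.univ.filter (fun u => IsTChild G r v u)

/-!
Call a vertex `x` of `T_c` remote from `c` when `d(c, x) > d(r, c) + q`. In a tree, a closed
excursion `E` from `c` through `y` can be replaced by a walk from `c` to `y` covering the same
vertices and of weight at most `w(E) - d(c, y)`. So if a walk of an optimal strategy made such an
excursion through a vertex remote from `c`, cutting it out and sending a new walk from `r` to `c`
to do the replacement instead would be strictly cheaper. Hence no walk visits two vertices that
are remote from a vertex separating them. Following the recursion of the labeling, whenever
`k(v) ≥ 2` one finds `k(v)` vertices of `T_v` that are pairwise separated in this way, and they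
are visited by pairwise distinct walks.
-/

section WalkWeight

variable {V : Type*} {G : SimpleGraph V} {w : Sym2 V → ℝ}

@[simp] theorem walkWeight_nil {a : V} : walkWeight w (Walk.nil : G.Walk a a) = 0 := rfl

@[simp] theorem walkWeight_cons {a b c : V} (h : G.Adj a b) (p : G.Walk b c) :
    walkWeight w (Walk.cons h p) = w s(a, b) + walkWeight w p := by
  simp [walkWeight]

@[simp] theorem walkWeight_append {a b c : V} (p : G.Walk a b) (p' : G.Walk b c) :
    walkWeight w (p.append p') = walkWeight w p + walkWeight w p' := by
  simp [walkWeight]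

theorem walkWeight_nonneg (hw : ∀ e ∈ G.edgeSet, 0 ≤ w e) {a b : V} (p : G.Walk a b) :
    0 ≤ walkWeight w p := by
  refine List.sum_nonneg fun x hx => ?_
  obtain ⟨e, he, rfl⟩ := List.mem_map.mp hx
  exact hw e (p.edges_subset_edgeSet he)

theorem wdist_le_walkWeight (hw : ∀ e ∈ G.edgeSet, 0 ≤ w e) {a b : V} (p : G.Walk a b) :
    wdist G w a b ≤ walkWeight w p :=
  csInf_le ⟨0, by rintro _ ⟨p, rfl⟩; exact walkWeight_nonneg hw p⟩ ⟨p, rfl⟩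

theorem le_wdist {a b : V} (hab : G.Reachable a b) {x : ℝ}
    (h : ∀ p : G.Walk a b, x ≤ walkWeight w p) : x ≤ wdist G w a b :=
  le_csInf (let ⟨p⟩ := hab; ⟨_, p, rfl⟩) (by rintro _ ⟨p, rfl⟩; exact h p)

theorem wdist_nonneg (hw : ∀ e ∈ G.edgeSet, 0 ≤ w e) {a b : V} (hab : G.Reachable a b) :
    0 ≤ wdist G w a b :=
  le_wdist hab (walkWeight_nonneg hw)

theorem wdist_le_add_wdist_of_adj (hw : ∀ e ∈ G.edgeSet, 0 ≤ w e) {a b c : V} (h : G.Adj a b)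
    (hbc : G.Reachable b c) : wdist G w a c ≤ w s(a, b) + wdist G w b c := by
  have : wdist G w a c - w s(a, b) ≤ wdist G w b c := le_wdist hbc fun p => by
    have := wdist_le_walkWeight hw (Walk.cons h p)
    rw [walkWeight_cons] at this
    linarith
  linarith

theorem wdist_add_wdist_le (hw : ∀ e ∈ G.edgeSet, 0 ≤ w e) {a b c : V} (hab : G.Reachable a b)
    (hc : ∀ p : G.Walk a b, c ∈ p.support) :
    wdist G w a c + wdist G w c b ≤ wdist G w a b := by
  classical
  refine le_wdist hab fun p => ?_
  rw [← p.take_spec (hc p), walkWeight_append]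
  exact add_le_add (wdist_le_walkWeight hw _) (wdist_le_walkWeight hw _)

theorem exists_walkWeight_lt_wdist_add {a b : V} (hab : G.Reachable a b) {ε : ℝ} (hε : 0 < ε) :
    ∃ p : G.Walk a b, walkWeight w p < wdist G w a b + ε := by
  obtain ⟨p⟩ := hab
  obtain ⟨_, ⟨p', rfl⟩, hp'⟩ := Real.lt_sInf_add_pos
    (s := {c | ∃ p : G.Walk a b, walkWeight w p = c}) ⟨_, p, rfl⟩ hε
  exact ⟨p', hp'⟩

end WalkWeight

theorem SimpleGraph.Walk.exists_eq_append_mem_support_or {V : Type*} {G : SimpleGraph V}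
    {a b x y : V} (W : G.Walk a b) (hx : x ∈ W.support) (hy : y ∈ W.support) :
    (∃ (p : G.Walk a x) (p' : G.Walk x b), W = p.append p' ∧ y ∈ p'.support) ∨
      ∃ (p : G.Walk a y) (p' : G.Walk y b), W = p.append p' ∧ x ∈ p'.support := by
  classical
  rw [← W.take_spec hx, Walk.mem_support_append_iff] at hy
  rcases hy with hy | hy
  · set T := W.takeUntil x hx
    refine Or.inr ⟨T.takeUntil y hy, (T.dropUntil y hy).append (W.dropUntil x hx), ?_, ?_⟩
    · rw [Walk.append_assoc, T.take_spec, W.take_spec]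
    · simp [Walk.mem_support_append_iff]
  · exact Or.inl ⟨_, _, (W.take_spec hx).symm, hy⟩

section Acyclic

variable {V : Type*} {G : SimpleGraph V}

theorem SimpleGraph.IsAcyclic.eq_of_adj_of_notMem_support (hG : G.IsAcyclic) {v u u' : V}
    (hu : G.Adj v u) (hu' : G.Adj v u') (p : G.Walk u u') (hv : v ∉ p.support) : u = u' := by
  have := isBridge_iff_forall_walk_mem_edges.mp (isAcyclic_iff_forall_adj_isBridge.mp hG hu')
    (Walk.cons hu p)
  rcases List.mem_cons.mp this with h | h
  · exact (Sym2.congr_right.mp h).symm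
  · exact absurd (p.fst_mem_support_of_mem_edges h) hv

theorem SimpleGraph.IsAcyclic.exists_eq_append_cons (hG : G.IsAcyclic) {c d : V} (h : G.Adj c d)
    (B : G.Walk d c) :
    ∃ (A : G.Walk d d) (E : G.Walk c c), B = A.append (Walk.cons h.symm E) := by
  classical
  have hc : c ∈ B.support := B.end_mem_support
  obtain ⟨B₁, E, rfl, hB₁⟩ : ∃ (B₁ : G.Walk d c) (E : G.Walk c c),
      B = B₁.append E ∧ B₁.support.count c = 1 :=
    ⟨_, _, (B.take_spec hc).symm, B.count_support_takeUntil_eq_one hc⟩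
  -- the first return of `B` to `c` must come back along the edge `cd`
  cases hrev : B₁.reverse with
  | nil => exact absurd h G.irrefl
  | cons h' R =>
    have hcR : c ∉ R.support := by
      have := congrArg (·.support.count c) hrev
      simp only [Walk.support_reverse, List.count_reverse, hB₁, Walk.support_cons,
        List.count_cons_self] at this
      exact List.count_eq_zero.mp (by omega)
    obtain rfl := hG.eq_of_adj_of_notMem_support h' h R hcR
    have hB₁' := congrArg Walk.reverse hrev
    rw [Walk.reverse_reverse, Walk.reverse_cons] at hB₁'
    exact ⟨R.reverse, E, by rw [hB₁', ← Walk.append_assoc]; rfl⟩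

theorem SimpleGraph.IsAcyclic.exists_walk_support_subset_add_wdist_le (hG : G.IsAcyclic)
    {w : Sym2 V → ℝ} (hw : ∀ e ∈ G.edgeSet, 0 ≤ w e) {c y : V} (E : G.Walk c c)
    (hy : y ∈ E.support) :
    ∃ F : G.Walk c y,
      E.support ⊆ F.support ∧ walkWeight w F + wdist G w c y ≤ walkWeight w E := by
  induction hn : E.length using Nat.strong_induction_on generalizing c y E with
  | _ n ih =>
  cases E with
  | nil =>
    obtain rfl := Walk.mem_support_nil_iff.mp hy
    exact ⟨Walk.nil, fun _ => id, by simpa using wdist_le_walkWeight hw Walk.nil⟩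
  | @cons _ d _ h B =>
    obtain ⟨A, E, rfl⟩ := hG.exists_eq_append_cons h B
    have hlen : A.length < n ∧ E.length < n := by
      subst hn
      simp only [Walk.length_cons, Walk.length_append]
      omega
    have hsupp : (Walk.cons h (A.append (Walk.cons h.symm E))).support =
        c :: (A.support ++ E.support) := by
      simp [Walk.support_append]
    have hweight : walkWeight w (Walk.cons h (A.append (Walk.cons h.symm E))) =
        w s(c, d) + walkWeight w A + w s(c, d) + walkWeight w E := by
      simp only [walkWeight_cons, walkWeight_append, Sym2.eq_swap (a := d)]
      ring
    rw [hsupp, hweight]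
    have hy' : y ∈ A.support ∨ y ∈ E.support := by
      rcases List.mem_cons.mp (hsupp ▸ hy) with rfl | hy
      · exact Or.inr E.start_mem_support
      · exact List.mem_append.mp hy
    rcases hy' with hyA | hyE
    · obtain ⟨F, hAF, hF⟩ := ih _ hlen.1 A hyA rfl
      refine ⟨E.append (Walk.cons h F), ?_, ?_⟩
      · intro z hz
        simp only [Walk.support_append, Walk.support_cons, List.tail_cons, List.mem_append]
        rcases List.mem_cons.mp hz with rfl | hz
        · exact Or.inl E.start_mem_support
        · exact (List.mem_append.mp hz).symm.imp id (hAF ·)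
      · have := wdist_le_add_wdist_of_adj hw h F.reachable
        simp only [walkWeight_append, walkWeight_cons]
        linarith
    · obtain ⟨F, hEF, hF⟩ := ih _ hlen.2 E hyE rfl
      refine ⟨Walk.cons h (A.append (Walk.cons h.symm F)), ?_, ?_⟩
      · simp only [Walk.support_cons, Walk.support_append, List.tail_cons]
        exact List.cons_subset_cons _ (List.append_subset.2
          ⟨List.subset_append_left _ _, List.Subset.trans hEF (List.subset_append_right _ _)⟩)
      · simp only [walkWeight_cons, walkWeight_append, Sym2.eq_swap (a := d)]
        linarith

end Acyclic

section RootedTree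

variable {V : Type*} {G : SimpleGraph V} {r v u u' x y : V}

theorem inSubtree_refl (G : SimpleGraph V) (r v : V) : InSubtree G r v v :=
  fun p => p.1.end_mem_support

theorem InSubtree.mem_support (h : InSubtree G r v u) (p : G.Walk r u) : v ∈ p.support := by
  classical
  exact p.support_toPath_subset_support (h p.toPath)

theorem InSubtree.trans (hvu : InSubtree G r v u) (hux : InSubtree G r u x) :
    InSubtree G r v x := by
  classical
  intro p
  exact p.1.support_takeUntil_subset_support (hux p) (hvu.mem_support _)

theorem inSubtree_iff_mem_support (hG : G.IsAcyclic) (p : G.Path r u) :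
    InSubtree G r v u ↔ v ∈ p.1.support := by
  have := hG.subsingleton_path r u
  exact ⟨fun h => h p, fun h p' => Subsingleton.elim p p' ▸ h⟩

/-- The witness is the part after `u` of the path from `r` to `x`. -/
theorem InSubtree.exists_walk_notMem_support (hG : G.Connected) (hvu : InSubtree G r v u)
    (hne : v ≠ u) (hux : InSubtree G r u x) : ∃ p : G.Walk u x, v ∉ p.support := by
  classical
  obtain ⟨p⟩ := hG.preconnected r x
  obtain ⟨a, b, ha, -, hab⟩ := p.toPath.2.mem_support_iff_exists_append.mp (hux p.toPath)
  exact ⟨b, fun hv =>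
    ((hab ▸ p.toPath.2).ne_of_mem_support_of_append hne (hvu ⟨a, ha⟩) hv) rfl⟩

theorem InSubtree.antisymm (hG : G.Connected) (hvu : InSubtree G r v u)
    (huv : InSubtree G r u v) : v = u := by
  by_contra hne
  obtain ⟨p, hp⟩ := hvu.exists_walk_notMem_support hG hne huv
  exact hp p.end_mem_support

theorem mem_childrenFinset [Fintype V] : u ∈ childrenFinset G r v ↔ IsTChild G r v u := by
  simp [childrenFinset]

theorem IsTChild.ne_root (hu : IsTChild G r v u) : u ≠ r := by
  rintro rfl
  have := hu.2 Path.nil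
  simp only [Path.nil_coe, Walk.support_nil, List.mem_singleton] at this
  subst this
  exact G.irrefl hu.1

theorem IsTChild.not_inSubtree (hG : G.Connected) (hu : IsTChild G r v u) :
    ¬ InSubtree G r u v :=
  fun h => G.ne_of_adj hu.1 (hu.2.antisymm hG h)

theorem IsTChild.eq_of_inSubtree (hG : G.IsTree) (hu : IsTChild G r v u)
    (hu' : IsTChild G r v u') (hx : InSubtree G r u x) (hx' : InSubtree G r u' x) : u = u' := by
  obtain ⟨a, ha⟩ := hu.2.exists_walk_notMem_support hG.connected (G.ne_of_adj hu.1) hx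
  obtain ⟨b, hb⟩ := hu'.2.exists_walk_notMem_support hG.connected (G.ne_of_adj hu'.1) hx'
  exact hG.isAcyclic.eq_of_adj_of_notMem_support hu.1 hu'.1 (a.append b.reverse)
    (by simp [Walk.mem_support_append_iff, ha, hb])

theorem IsTChild.mem_support_of_ne (hG : G.IsTree) (hu : IsTChild G r v u)
    (hu' : IsTChild G r v u') (hne : u ≠ u') (hx : InSubtree G r u x) (hy : InSubtree G r u' y)
    (p : G.Walk x y) : v ∈ p.support := by
  by_contra hv
  obtain ⟨a, ha⟩ := hu.2.exists_walk_notMem_support hG.connected (G.ne_of_adj hu.1) hx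
  obtain ⟨b, hb⟩ := hu'.2.exists_walk_notMem_support hG.connected (G.ne_of_adj hu'.1) hy
  exact hne (hG.isAcyclic.eq_of_adj_of_notMem_support hu.1 hu'.1 ((a.append p).append b.reverse)
    (by simp [Walk.mem_support_append_iff, ha, hb, hv]))

theorem IsTChild.mem_support_of_inSubtree (hG : G.IsTree) (hu : IsTChild G r v u)
    (hx : InSubtree G r u x) (p : G.Walk v x) : u ∈ p.support := by
  classical
  obtain ⟨a⟩ := hG.connected.preconnected r v
  have ha : u ∉ a.toPath.1.support := fun h =>
    hu.not_inSubtree hG.connected ((inSubtree_iff_mem_support hG.isAcyclic _).mpr h)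
  have := hx.mem_support (a.toPath.1.append p)
  rw [Walk.mem_support_append_iff] at this
  exact this.resolve_left ha

theorem wellFounded_isTChild [Finite V] (hG : G.Connected) :
    WellFounded fun u v => IsTChild G r v u :=
  Subrelation.wf (r := InvImage (· < ·) fun v => {x | InSubtree G r v x}.ncard)
    (fun {u v} hu => Set.ncard_lt_ncard ((Set.ssubset_iff_of_subset fun x hx => hu.2.trans hx).mpr
      ⟨v, inSubtree_refl G r v, hu.not_inSubtree hG⟩))
    (InvImage.wf _ wellFounded_lt)

end RootedTree

namespace ExplStrategy

variable {V : Type*} {G : SimpleGraph V} {r : V} {w : Sym2 V → ℝ} {q : ℝ}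

def cons (S : ExplStrategy G r) {y : V} (p : G.Walk r y) : ExplStrategy G r where
  k := S.k + 1
  kpos := S.k.succ_pos
  ends := Fin.cons (α := fun _ => V) y S.ends
  walks := Fin.cases p S.walks
  covers v := by
    obtain ⟨i, hi⟩ := S.covers v
    exact ⟨i.succ, hi⟩

theorem stratCost_cons (S : ExplStrategy G r) {y : V} (p : G.Walk r y) :
    stratCost w q (S.cons p) = stratCost w q S + q + walkWeight w p := by
  change ((S.k + 1 : ℕ) : ℝ) * q + ∑ j : Fin (S.k + 1), walkWeight w ((S.cons p).walks j) = _
  rw [Fin.sum_univ_succ]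
  change _ + (walkWeight w p + ∑ j : Fin S.k, walkWeight w (S.walks j)) = _
  simp only [stratCost]
  push_cast
  ring

def replace (S : ExplStrategy G r) (i : Fin S.k) (p : G.Walk r (S.ends i))
    (hp : ∀ v ∈ (S.walks i).support,
      v ∈ p.support ∨ ∃ j ≠ i, v ∈ (S.walks j).support) :
    ExplStrategy G r where
  k := S.k
  kpos := S.kpos
  ends := S.ends
  walks j := if hj : j = i then p.copy rfl (congrArg S.ends hj.symm) else S.walks j
  covers v := by
    obtain ⟨j, hj⟩ := S.covers v
    by_cases hji : j = i
    · subst hji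
      rcases hp v hj with h | ⟨j', hj', h⟩
      · exact ⟨j, by simpa using h⟩
      · exact ⟨j', by simpa [hj'] using h⟩
    · exact ⟨j, by simpa [hji] using hj⟩

theorem stratCost_replace (S : ExplStrategy G r) (i : Fin S.k) (p : G.Walk r (S.ends i))
    (hp : ∀ v ∈ (S.walks i).support,
      v ∈ p.support ∨ ∃ j ≠ i, v ∈ (S.walks j).support) :
    stratCost w q (S.replace i p hp) =
      stratCost w q S + walkWeight w p - walkWeight w (S.walks i) := by
  have hj : ∀ j : Fin S.k, walkWeight w ((S.replace i p hp).walks j) = walkWeight w (S.walks j) +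
      if j = i then walkWeight w p - walkWeight w (S.walks i) else 0 := by
    intro j
    by_cases hji : j = i
    · subst hji
      simp [replace]
    · simp [replace, hji]
  change (S.k : ℝ) * q + ∑ j : Fin S.k, walkWeight w ((S.replace i p hp).walks j) = _
  simp only [stratCost, hj, Finset.sum_add_distrib, Finset.sum_ite_eq', Finset.mem_univ, if_true]
  ring

end ExplStrategy

section Optimal

variable {V : Type*} {G : SimpleGraph V} {r : V} {w : Sym2 V → ℝ} {q : ℝ}
  {S : ExplStrategy G r}

/-- Otherwise cutting `E` out of its walk and adding `N` as a new walk would be cheaper. -/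
theorem IsOptimal.walkWeight_le_of_support_subset (hopt : IsOptimal w q S) {i : Fin S.k}
    {c y : V} {P₁ : G.Walk r c} {E : G.Walk c c} {P₂ : G.Walk c (S.ends i)}
    (hi : S.walks i = P₁.append (E.append P₂)) (N : G.Walk r y) (hEN : E.support ⊆ N.support) :
    walkWeight w E ≤ q + walkWeight w N := by
  have hcov : ∀ v ∈ ((S.cons N).walks i.succ).support,
      v ∈ (P₁.append P₂).support ∨
        ∃ j ≠ i.succ, v ∈ ((S.cons N).walks j).support := by
    intro v hv
    change v ∈ (S.walks i).support at hv
    simp only [hi, Walk.mem_support_append_iff] at hv ⊢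
    rcases hv with hv | hv | hv
    · exact Or.inl (Or.inl hv)
    · exact Or.inr ⟨0, (Fin.succ_ne_zero i).symm, hEN hv⟩
    · exact Or.inl (Or.inr hv)
  have hle := hopt ((S.cons N).replace i.succ (P₁.append P₂) hcov)
  have hreplace :=
    ExplStrategy.stratCost_replace (w := w) (q := q) (S.cons N) i.succ (P₁.append P₂) hcov
  change _ = _ + walkWeight w (P₁.append P₂ : G.Walk r (S.ends i)) - walkWeight w (S.walks i)
    at hreplace
  have hcons := ExplStrategy.stratCost_cons (w := w) (q := q) S N
  simp only [hi, walkWeight_append] at hreplace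
  linarith

theorem IsOptimal.wdist_le_of_mem_support (hG : G.IsAcyclic) (hw : ∀ e ∈ G.edgeSet, 0 ≤ w e)
    (hopt : IsOptimal w q S) {i : Fin S.k} {c y : V} {P₁ : G.Walk r c} {E : G.Walk c c}
    {P₂ : G.Walk c (S.ends i)} (hi : S.walks i = P₁.append (E.append P₂))
    (hy : y ∈ E.support) :
    wdist G w c y ≤ wdist G w r c + q := by
  refine le_of_forall_pos_lt_add fun ε hε => ?_
  obtain ⟨R, hR⟩ := exists_walkWeight_lt_wdist_add (w := w) P₁.reachable hε
  obtain ⟨F, hEF, hF⟩ := hG.exists_walk_support_subset_add_wdist_le hw E hy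
  have := hopt.walkWeight_le_of_support_subset hi (R.append F) fun z hz => by
    simp [Walk.mem_support_append_iff, hEF hz]
  rw [walkWeight_append] at this
  linarith

/-- The walk makes a closed excursion from `c` through `x`. -/
theorem IsOptimal.wdist_le_of_append (hG : G.IsAcyclic) (hw : ∀ e ∈ G.edgeSet, 0 ≤ w e)
    (hopt : IsOptimal w q S) {i : Fin S.k} {c x y : V} (p : G.Walk r x) (p' : G.Walk x (S.ends i))
    (hi : S.walks i = p.append p') (hy : y ∈ p'.support) (hcx : InSubtree G r c x)
    (hsep : ∀ W : G.Walk x y, c ∈ W.support) : wdist G w c x ≤ wdist G w r c + q := by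
  classical
  have hcp : c ∈ p.support := hcx.mem_support p
  have hcp' : c ∈ p'.support := p'.support_takeUntil_subset_support hy (hsep _)
  refine hopt.wdist_le_of_mem_support hG hw (P₁ := p.takeUntil c hcp)
    (E := (p.dropUntil c hcp).append (p'.takeUntil c hcp')) (P₂ := p'.dropUntil c hcp') ?_ ?_
  · conv_lhs => rw [hi, ← p.take_spec hcp, ← p'.take_spec hcp']
    simp only [Walk.append_assoc]
  · simp [Walk.mem_support_append_iff]

end Optimal

section Remote

variable {V : Type*} {G : SimpleGraph V} {w : Sym2 V → ℝ} {r : V} {q : ℝ} {v u x : V}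

def IsRemote (G : SimpleGraph V) (w : Sym2 V → ℝ) (r : V) (q : ℝ) (c x : V) : Prop :=
  InSubtree G r c x ∧ wdist G w r c + q < wdist G w c x

def IsRemoteSet (G : SimpleGraph V) (w : Sym2 V → ℝ) (r : V) (q : ℝ) (v : V) (M : Finset V) :
    Prop :=
  (∀ x ∈ M, IsRemote G w r q v x) ∧
    ∀ x ∈ M, ∀ y ∈ M, x ≠ y →
      ∃ c, IsRemote G w r q c x ∧ IsRemote G w r q c y ∧ ∀ p : G.Walk x y, c ∈ p.support

theorem IsRemote.of_isTChild (hG : G.IsTree) (hw : ∀ e ∈ G.edgeSet, 0 ≤ w e)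
    (hu : IsTChild G r v u) (hx : IsRemote G w r q u x) : IsRemote G w r q v x := by
  have hR := hG.connected.preconnected
  have h₁ := wdist_add_wdist_le hw (hR v x) (hu.mem_support_of_inSubtree hG hx.1)
  have h₂ := wdist_add_wdist_le hw (hR r u) hu.2.mem_support
  have h₃ := wdist_nonneg hw (hR v u)
  exact ⟨hu.2.trans hx.1, by linarith [hx.2]⟩

theorem IsRemoteSet.of_isTChild (hG : G.IsTree) (hw : ∀ e ∈ G.edgeSet, 0 ≤ w e)
    (hu : IsTChild G r v u) {M : Finset V} (hM : IsRemoteSet G w r q u M) :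
    IsRemoteSet G w r q v M :=
  ⟨fun x hx => (hM.1 x hx).of_isTChild hG hw hu, hM.2⟩

theorem isRemoteSet_empty : IsRemoteSet G w r q v ∅ := by
  simp [IsRemoteSet]

theorem isRemoteSet_singleton (hx : IsRemote G w r q v x) : IsRemoteSet G w r q v {x} := by
  simp [IsRemoteSet, hx]

theorem IsRemoteSet.biUnion_childrenFinset [Fintype V] [DecidableEq V] (hG : G.IsTree)
    {C : V → Finset V}
    (hC : ∀ u ∈ childrenFinset G r v,
      IsRemoteSet G w r q v (C u) ∧ ∀ x ∈ C u, InSubtree G r u x) :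
    IsRemoteSet G w r q v ((childrenFinset G r v).biUnion C) := by
  simp only [IsRemoteSet, Finset.mem_biUnion]
  refine ⟨fun x ⟨u, hu, hx⟩ => (hC u hu).1.1 x hx,
    fun x ⟨u, hu, hx⟩ y ⟨u', hu', hy⟩ hxy => ?_⟩
  by_cases huu' : u = u'
  · subst huu'
    exact (hC u hu).1.2 x hx y hy hxy
  · exact ⟨v, (hC u hu).1.1 x hx, (hC u' hu').1.1 y hy,
      (mem_childrenFinset.mp hu).mem_support_of_ne hG (mem_childrenFinset.mp hu') huu'
        ((hC u hu).2 x hx) ((hC u' hu').2 y hy)⟩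

theorem card_biUnion_childrenFinset [Fintype V] [DecidableEq V] (hG : G.IsTree)
    {C : V → Finset V} (hC : ∀ u ∈ childrenFinset G r v, ∀ x ∈ C u, InSubtree G r u x) :
    ((childrenFinset G r v).biUnion C).card = ∑ u ∈ childrenFinset G r v, (C u).card :=
  Finset.card_biUnion fun u hu u' hu' hne => Finset.disjoint_left.mpr fun x hx hx' =>
    hne ((mem_childrenFinset.mp hu).eq_of_inSubtree hG (mem_childrenFinset.mp hu')
      (hC u hu x hx) (hC u' hu' x hx'))

/-- Distinct vertices of a remote set lie on distinct walks of an optimal strategy. -/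
theorem IsOptimal.card_le_of_isRemoteSet (hG : G.IsTree) (hw : ∀ e ∈ G.edgeSet, 0 ≤ w e)
    {S : ExplStrategy G r} (hopt : IsOptimal w q S) {M : Finset V}
    (hM : IsRemoteSet G w r q v M) :
    M.card ≤ Nat.card {a : Fin S.k // ∃ u ∈ (S.walks a).support, InSubtree G r v u} := by
  choose φ hφ using S.covers
  have hinj : ∀ x ∈ M, ∀ y ∈ M, φ x = φ y → x = y := by
    intro x hx y hy hxy
    by_contra hne
    obtain ⟨c, hcx, hcy, hsep⟩ := hM.2 x hx y hy hne
    rcases (S.walks (φ x)).exists_eq_append_mem_support_or (hφ x) (hxy ▸ hφ y) with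
      ⟨p, p', hi, hy'⟩ | ⟨p, p', hi, hx'⟩
    · exact (hopt.wdist_le_of_append hG.isAcyclic hw p p' hi hy' hcx.1 hsep).not_gt hcx.2
    · exact (hopt.wdist_le_of_append hG.isAcyclic hw p p' hi hx' hcy.1
        fun W => by simpa using hsep W.reverse).not_gt hcy.2
  rw [← Nat.card_eq_finsetCard]
  exact Nat.card_le_card_of_injective (fun x : M => ⟨φ x, x, hφ x, (hM.1 x x.2).1⟩)
    fun x y h => Subtype.ext (hinj x x.2 y y.2 (congrArg Subtype.val h))

open scoped Classical in
theorem exists_isRemoteSet_of_isTChild (hG : G.IsTree) (hw : ∀ e ∈ G.edgeSet, 0 ≤ w e)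
    (hu : IsTChild G r v u) {n : ℕ} (hn : 1 ≤ n) (hx : InSubtree G r u x)
    (ih : ∃ M, IsRemoteSet G w r q u M ∧ (2 ≤ n → n ≤ M.card)) :
    ∃ C : Finset V, (IsRemoteSet G w r q v C ∧ ∀ y ∈ C, InSubtree G r u y) ∧
      (if n = 1 ∧ wdist G w v x ≤ wdist G w r v + q then n - 1 else n) ≤ C.card := by
  obtain ⟨M, hM, hMcard⟩ := ih
  by_cases h1 : n = 1
  · subst h1
    by_cases hnear : wdist G w v x ≤ wdist G w r v + q
    · exact ⟨∅, ⟨isRemoteSet_empty, by simp⟩, by simp [hnear]⟩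
    · exact ⟨{x}, ⟨isRemoteSet_singleton ⟨hu.2.trans hx, not_le.mp hnear⟩, by simpa⟩,
        by simp [hnear]⟩
  · exact ⟨M, ⟨hM.of_isTChild hG hw hu, fun y hy => (hM.1 y hy).1⟩,
      by simpa [h1] using hMcard (by omega)⟩

open scoped Classical in
theorem exists_isRemoteSet_card_ge [Fintype V] (hG : G.IsTree) (hw : ∀ e ∈ G.edgeSet, 0 ≤ w e)
    (f : V → V) (hf : ∀ u, u ≠ r → InSubtree G r u (f u)) (k : V → ℕ)
    (hk_leaf : ∀ v, IsTLeaf G r v → k v = 1)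
    (hk_node : ∀ v, ¬ IsTLeaf G r v →
        k v = max 1 (∑ u ∈ childrenFinset G r v,
          if k u = 1 ∧ wdist G w v (f u) ≤ wdist G w r v + q then k u - 1 else k u))
    (v : V) : ∃ M, IsRemoteSet G w r q v M ∧ (2 ≤ k v → k v ≤ M.card) := by
  have hk_pos : ∀ u, 1 ≤ k u := fun u => by
    by_cases hu : IsTLeaf G r u
    · exact (hk_leaf u hu).ge
    · exact (hk_node u hu).trans_ge (le_max_left _ _)
  induction v using (wellFounded_isTChild (r := r) hG.connected).induction with | _ v ih =>
  by_cases hleaf : IsTLeaf G r v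
  · exact ⟨∅, isRemoteSet_empty, by simp [hk_leaf v hleaf]⟩
  choose! C hC hCcard using fun u (hu : u ∈ childrenFinset G r v) =>
    have hu := mem_childrenFinset.mp hu
    exists_isRemoteSet_of_isTChild hG hw hu (hk_pos u) (hf u hu.ne_root) (ih u hu)
  refine ⟨(childrenFinset G r v).biUnion C, IsRemoteSet.biUnion_childrenFinset hG hC,
    fun hk => ?_⟩
  rw [card_biUnion_childrenFinset hG fun u hu => (hC u hu).2]
  have := Finset.sum_le_sum hCcard
  rw [hk_node v hleaf] at hk ⊢
  omega

end Remote

open scoped Classical in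
theorem labeling_lower_bound_general {V : Type*} [Fintype V]
    (G : SimpleGraph V) (hG : G.IsTree)
    (r : V) (w : Sym2 V → ℝ) (hw : ∀ e ∈ G.edgeSet, 0 < w e)
    (q : ℝ)
    (f : V → V)
    (hf : ∀ u : V, u ≠ r →
        IsTLeaf G r (f u) ∧ InSubtree G r u (f u) ∧
        ∀ x, IsTLeaf G r x → InSubtree G r u x → wdist G w u x ≤ wdist G w u (f u))
    (k : V → ℕ)
    (hk_leaf : ∀ v, IsTLeaf G r v → k v = 1)
    (hk_node : ∀ v, ¬ IsTLeaf G r v →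
        k v = max 1 (∑ u ∈ childrenFinset G r v,
          if k u = 1 ∧ wdist G w v (f u) ≤ wdist G w r v + q then k u - 1 else k u)) :
    ∀ (v : V) (S : ExplStrategy G r), IsOptimal w q S →
      k v ≤ Nat.card {a : Fin S.k // ∃ u ∈ (S.walks a).support, InSubtree G r v u} := by
  intro v S hopt
  have hw' : ∀ e ∈ G.edgeSet, 0 ≤ w e := fun e he => (hw e he).le
  by_cases hk : 2 ≤ k v
  · obtain ⟨M, hM, hMk⟩ := exists_isRemoteSet_card_ge hG hw' f (fun u hu => (hf u hu).2.1) k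
      hk_leaf hk_node v
    exact (hMk hk).trans (hopt.card_le_of_isRemoteSet hG hw' hM)
  · obtain ⟨i, hi⟩ := S.covers v
    have : 0 < Nat.card {a : Fin S.k // ∃ u ∈ (S.walks a).support, InSubtree G r v u} :=
      Nat.card_pos_iff.mpr ⟨⟨i, v, hi, inSubtree_refl G r v⟩, inferInstance⟩
    omega

open scoped Classical in
/-- Lemma 2 of the paper: given the recursively defined labeling `k` (with `k v = 1`
for leaves, and `k v = max 1 (Σ_{u child of v} κ(u))` for non-leaves, where
`κ(u) = k u - 1` when `k u = 1` and the furthest leaf `f u` of `T_u` satisfies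
`d(v, f u) ≤ d(r, v) + q`, and `κ(u) = k u` otherwise), every cost-optimal
exploration strategy uses at least `k v` walks that enter the subtree `T_v`. -/
theorem labeling_lower_bound {V : Type*} [Fintype V]
    (G : SimpleGraph V) (hG : G.IsTree) (hcard : 1 < Fintype.card V)
    (r : V) (w : Sym2 V → ℝ) (hw : ∀ e ∈ G.edgeSet, 0 < w e)
    (q : ℝ) (hq : 0 ≤ q)
    (hcompressed : ∀ v : V, v ≠ r → ¬ IsTLeaf G r v → 2 ≤ (childrenFinset G r v).card)
    (f : V → V)
    (hf : ∀ u : V, u ≠ r →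
        IsTLeaf G r (f u) ∧ InSubtree G r u (f u) ∧
        ∀ x, IsTLeaf G r x → InSubtree G r u x → wdist G w u x ≤ wdist G w u (f u))
    (k : V → ℕ)
    (hk_leaf : ∀ v, IsTLeaf G r v → k v = 1)
    (hk_node : ∀ v, ¬ IsTLeaf G r v →
        k v = max 1 (∑ u ∈ childrenFinset G r v,
          if k u = 1 ∧ wdist G w v (f u) ≤ wdist G w r v + q then k u - 1 else k u)) :
    ∀ (v : V) (S : ExplStrategy G r), IsOptimal w q S →
      k v ≤ Nat.card {a : Fin S.k // ∃ u ∈ (S.walks a).support, InSubtree G r v u} :=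
  labeling_lower_bound_general G hG r w hw q f hf k hk_leaf hk_node
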